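/- arXiv:1206.1897 — 2 statements merged into one kernel-verified Lean document; each statement's English description precedes it below -/
import Mathlib

section
/- Let k ≥ 2 be an even integer and let D be a k-quasi-transitive digraph with a unique initial strong component C. If v is a vertex of C satisfying Δ⁺_C ≥ d⁺(v) > Δ⁺_C − k (out-degrees taken in C), then v is a (k+1)-king of D. -/
variable {V : Type*}

/-- A directed path of length `n` from `u` to `v` in the digraph with arc relation `A`:
a sequence of `n + 1` pairwise distinct vertices, consecutive ones joined by arcs. -/
def HasPathN (A : V → V → Prop) (u v : V) (n : ℕ) : Prop :=
  ∃ f : Fin (n + 1) → V, Function.Injective f ∧ f 0 = u ∧ f (Fin.last n) = v ∧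
    ∀ i : Fin n, A (f i.castSucc) (f i.succ)

/-- The distance from `u` to `v`: the length of a shortest directed path from `u` to `v`,
`⊤` if there is no such path. -/
noncomputable def ddist (A : V → V → Prop) (u v : V) : ℕ∞ :=
  sInf {n : ℕ∞ | ∃ m : ℕ, n = (m : ℕ∞) ∧ HasPathN A u v m}

/-- `D` is `k`-quasi-transitive if for every directed path `(v_0, …, v_k)` of length `k`,
either `(v_0, v_k)` or `(v_k, v_0)` is an arc. -/
def KQuasiTrans (A : V → V → Prop) (k : ℕ) : Prop :=
  ∀ u v : V, HasPathN A u v k → A u v ∨ A v u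

/-- A vertex `v` is an `r`-king if every vertex is within distance `r` from `v`. -/
def IsRKing (A : V → V → Prop) (r : ℕ) (v : V) : Prop :=
  ∀ u : V, ddist A v u ≤ (r : ℕ∞)

/-- `u` reaches `v` by a directed path. -/
def Reaches (A : V → V → Prop) (u v : V) : Prop :=
  ∃ n : ℕ, HasPathN A u v n

/-- A strong component: the set of all vertices mutually reachable with some vertex. -/
def IsStrongComponent (A : V → V → Prop) (S : Set V) : Prop :=
  ∃ v : V, S = {u | Reaches A u v ∧ Reaches A v u}

/-- An initial strong component: a strong component receiving no arcs from outside. -/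
def IsInitialStrongComponent (A : V → V → Prop) (S : Set V) : Prop :=
  IsStrongComponent A S ∧ ∀ u v : V, u ∉ S → v ∈ S → ¬ A u v

/-- The out-degree of `v` in `D`. -/
noncomputable def outDeg (A : V → V → Prop) (v : V) : ℕ :=
  {u : V | A v u}.ncard

/-- The out-degree of `v` in the subdigraph of `D` induced by `C`. -/
noncomputable def outDegIn (A : V → V → Prop) (C : Set V) (v : V) : ℕ :=
  {u ∈ C | A v u}.ncard

/-- The maximum out-degree of the subdigraph induced by `C`. -/
noncomputable def maxOutDegIn (A : V → V → Prop) (C : Set V) : ℕ :=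
  sSup (outDegIn A C '' C)

/-!
If some vertex `u` were at distance at least `k + 2` from `v` (it is reachable, as `C` is the
only initial strong component), let `v = x₀ x₁ ⋯ x_{k+2}` start a shortest path towards it. A
forward chord would shortcut the path, so quasi-transitivity on `x₀ ⋯ x_k` and on `x₂ ⋯ x_{k+2}`
yields the arcs `x_k → x₀` and `x_{k+2} → x₂`. Thus `x₀ ⋯ x_k` is a `(k + 1)`-cycle, and
`w = x_{k+2}` dominates one of its vertices while receiving no arc from it. If `w` dominates a
cycle vertex `c`, the `k`-path starting with `w c` and running along the cycle forces `w` to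
dominate the vertex two steps before `c`; since `k + 1` is odd, `w` dominates the whole cycle. A
similar `k`-path ending with the arc `v → x` shows that `w` dominates every out-neighbour `x` of
`v`. Only `x₁` is counted twice, so `d⁺_C(w) ≥ d⁺_C(v) + k > Δ⁺_C`.
-/

section Walks

variable {A : V → V → Prop}

def IsWalk (A : V → V → Prop) (F : ℕ → V) (n : ℕ) : Prop :=
  ∀ i < n, A (F i) (F (i + 1))

def HasWalk (A : V → V → Prop) (u v : V) (n : ℕ) : Prop :=
  ∃ F : ℕ → V, IsWalk A F n ∧ F 0 = u ∧ F n = v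

theorem IsWalk.hasWalk {F : ℕ → V} {n i j : ℕ} (hF : IsWalk A F n) (hij : i ≤ j) (hjn : j ≤ n) :
    HasWalk A (F i) (F j) (j - i) :=
  ⟨fun t => F (i + t), fun t ht => hF (i + t) (by omega), rfl,
    by simp only [Nat.add_sub_cancel' hij]⟩

theorem HasWalk.of_arc {u v : V} (h : A u v) : HasWalk A u v 1 :=
  ⟨fun t => if t = 0 then u else v, fun t ht => by simpa [show t = 0 by omega] using h, rfl, rfl⟩

theorem HasWalk.trans {u v w : V} {a b : ℕ} (h₁ : HasWalk A u v a) (h₂ : HasWalk A v w b) :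
    HasWalk A u w (a + b) := by
  obtain ⟨F, hF, rfl, rfl⟩ := h₁
  obtain ⟨G, hG, hG0, rfl⟩ := h₂
  refine ⟨fun t => if t ≤ a then F t else G (t - a), fun t ht => ?_, by simp, ?_⟩
  · rcases lt_trichotomy t a with h | rfl | h
    · simpa [h.le, Nat.succ_le_of_lt h] using hF t h
    · simpa [hG0] using hG 0 (by omega)
    · simpa [show ¬ t ≤ a by omega, show ¬ t + 1 ≤ a by omega, Nat.sub_add_comm h.le]
        using hG (t - a) (by omega)
  · rcases Nat.eq_zero_or_pos b with rfl | hb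
    · simp [hG0]
    · simp [show ¬ a + b ≤ a by omega]

theorem HasPathN.hasWalk {u v : V} {n : ℕ} (h : HasPathN A u v n) : HasWalk A u v n := by
  obtain ⟨f, -, rfl, rfl, hf⟩ := h
  refine ⟨fun t => f ⟨min t n, by omega⟩, fun t ht => ?_, rfl, by simp [Fin.last]⟩
  simpa [Fin.castSucc, Fin.succ, min_eq_left ht.le, min_eq_left (Nat.succ_le_of_lt ht)]
    using hf ⟨t, ht⟩

theorem hasPathN_of_isWalk {F : ℕ → V} {n : ℕ} (hF : IsWalk A F n)
    (hinj : Set.InjOn F (Set.Iic n)) : HasPathN A (F 0) (F n) n :=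
  ⟨fun i => F i,
    fun i j h => Fin.ext (hinj (Nat.lt_succ_iff.mp i.isLt) (Nat.lt_succ_iff.mp j.isLt) h),
    rfl, rfl, fun i => hF i i.isLt⟩

/-- A shortest walk repeats no vertex: the closed subwalk between two visits could be cut out. -/
theorem HasWalk.exists_hasPathN_le {u v : V} {n : ℕ} (h : HasWalk A u v n) :
    ∃ m ≤ n, HasPathN A u v m := by
  classical
  obtain ⟨N, hN, hmin⟩ : ∃ N, HasWalk A u v N ∧ ∀ m < N, ¬ HasWalk A u v m :=
    ⟨Nat.find ⟨n, h⟩, Nat.find_spec ⟨n, h⟩, fun m => Nat.find_min ⟨n, h⟩⟩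
  obtain ⟨F, hF, rfl, rfl⟩ := hN
  refine ⟨N, not_lt.mp fun hn => hmin n hn h, hasPathN_of_isWalk hF ?_⟩
  intro i hi j hj hij
  by_contra hne
  wlog hlt : i < j generalizing i j
  · exact this hj hi hij.symm (Ne.symm hne) (by omega)
  rw [Set.mem_Iic] at hi hj
  have hcut := (hF.hasWalk (Nat.zero_le i) hi).trans (hij ▸ hF.hasWalk hj le_rfl)
  exact hmin _ (by omega) hcut

theorem reaches_iff_exists_hasWalk {u v : V} : Reaches A u v ↔ ∃ n, HasWalk A u v n :=
  ⟨fun ⟨n, h⟩ => ⟨n, h.hasWalk⟩, fun ⟨_, h⟩ =>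
    let ⟨m, _, hm⟩ := h.exists_hasPathN_le; ⟨m, hm⟩⟩

theorem IsWalk.reaches {F : ℕ → V} {n i j : ℕ} (hF : IsWalk A F n)
    (hij : i ≤ j) (hjn : j ≤ n) : Reaches A (F i) (F j) :=
  reaches_iff_exists_hasWalk.mpr ⟨_, hF.hasWalk hij hjn⟩

theorem Reaches.refl (u : V) : Reaches A u u :=
  reaches_iff_exists_hasWalk.mpr ⟨0, fun _ => u, fun _ h => absurd h (Nat.not_lt_zero _), rfl, rfl⟩

theorem Reaches.of_arc {u v : V} (h : A u v) : Reaches A u v :=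
  reaches_iff_exists_hasWalk.mpr ⟨1, .of_arc h⟩

theorem Reaches.trans {u v w : V} (h₁ : Reaches A u v) (h₂ : Reaches A v w) : Reaches A u w := by
  obtain ⟨a, ha⟩ := reaches_iff_exists_hasWalk.mp h₁
  obtain ⟨b, hb⟩ := reaches_iff_exists_hasWalk.mp h₂
  exact reaches_iff_exists_hasWalk.mpr ⟨a + b, ha.trans hb⟩

theorem ddist_le_of_hasWalk {u v : V} {n : ℕ} (h : HasWalk A u v n) : ddist A u v ≤ n := by
  obtain ⟨m, hmn, hm⟩ := h.exists_hasPathN_le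
  exact (sInf_le ⟨m, rfl, hm⟩ : ddist A u v ≤ m).trans (by exact_mod_cast hmn)

end Walks

section Components

variable {A : V → V → Prop}

/-- Among the vertices reaching `u`, one reached from the fewest vertices lies in an initial
strong component. -/
theorem exists_isInitialStrongComponent_forall_reaches [Finite V] (u : V) :
    ∃ S : Set V, IsInitialStrongComponent A S ∧ ∀ s ∈ S, Reaches A s u := by
  obtain ⟨m, hmu, hmin⟩ := Set.exists_min_image {w | Reaches A w u}
    (fun w => {z | Reaches A z w}.ncard) (Set.toFinite _) ⟨u, Reaches.refl u⟩
  have hback : ∀ w, Reaches A w m → Reaches A m w := by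
    intro w hwm
    by_contra hmw
    have hlt : {z | Reaches A z w}.ncard < {z | Reaches A z m}.ncard :=
      Set.ncard_lt_ncard ((Set.ssubset_iff_of_subset fun z hz => hz.trans hwm).mpr
        ⟨m, Reaches.refl m, hmw⟩) (Set.toFinite _)
    exact hlt.not_ge (hmin w (hwm.trans hmu))
  refine ⟨{z | Reaches A z m ∧ Reaches A m z}, ⟨⟨m, rfl⟩, ?_⟩, fun s hs => hs.1.trans hmu⟩
  intro y z hy hz hyz
  have hym : Reaches A y m := (Reaches.of_arc hyz).trans hz.1
  exact hy ⟨hym, hback y hym⟩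

theorem reaches_of_forall_isInitialStrongComponent_eq [Finite V] {C : Set V}
    (huniq : ∀ S : Set V, IsInitialStrongComponent A S → S = C) {v : V} (hv : v ∈ C) (u : V) :
    Reaches A v u := by
  obtain ⟨S, hS, hSu⟩ := exists_isInitialStrongComponent_forall_reaches (A := A) u
  exact hSu v (huniq S hS ▸ hv)

theorem IsStrongComponent.mem_of_reaches {C : Set V} (hC : IsStrongComponent A C) {v z : V}
    (hv : v ∈ C) (hvz : Reaches A v z) (hzv : Reaches A z v) : z ∈ C := by
  obtain ⟨c, rfl⟩ := hC
  exact ⟨hzv.trans hv.1, hv.2.trans hvz⟩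

end Components

section Cycles

variable {A : V → V → Prop}

def IsDirectedCycle (A : V → V → Prop) {n : ℕ} (c : ZMod n → V) : Prop :=
  Function.Injective c ∧ ∀ i, A (c i) (c (i + 1))

theorem isDirectedCycle_of_isWalk {F : ℕ → V} {k n : ℕ} (hF : IsWalk A F n)
    (hinj : Set.InjOn F (Set.Iic n)) (hkn : k ≤ n) (hk : A (F k) (F 0)) :
    IsDirectedCycle A (fun i : ZMod (k + 1) => F i.val) := by
  have hval (i : ZMod (k + 1)) : i.val ∈ Set.Iic n := by
    have := i.val_lt
    rw [Set.mem_Iic]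
    omega
  refine ⟨fun i j h => ZMod.val_injective _ (hinj (hval i) (hval j) h), fun i => ?_⟩
  obtain ⟨j, hj, rfl⟩ : ∃ j < k + 1, (j : ZMod (k + 1)) = i :=
    ⟨i.val, i.val_lt, ZMod.natCast_zmod_val i⟩
  dsimp only
  rw [← Nat.cast_succ, ZMod.val_natCast, ZMod.val_natCast, Nat.mod_eq_of_lt hj]
  rcases Nat.lt_succ_iff_lt_or_eq.mp hj with hj | rfl
  · rw [Nat.mod_eq_of_lt (Nat.succ_lt_succ hj)]
    exact hF j (by omega)
  · rwa [Nat.mod_self]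

theorem ZMod.natCast_injOn_Iio (n : ℕ) : Set.InjOn (Nat.cast : ℕ → ZMod n) (Set.Iio n) :=
  fun s hs t ht h => by
    simpa [Nat.mod_eq_of_lt hs, Nat.mod_eq_of_lt ht] using (ZMod.natCast_eq_natCast_iff' s t n).mp h

/-- Quasi-transitivity applied to the `k`-path `w, c a, c (a + 1), …, c (a - 3), y`. -/
theorem KQuasiTrans.arc_or_arc_of_isDirectedCycle {m : ℕ} (hqt : KQuasiTrans A (m + 2))
    {c : ZMod (m + 3) → V} (hc : IsDirectedCycle A c) {w y : V} {a : ZMod (m + 3)}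
    (hw : ∀ i, c i ≠ w) (hyw : y ≠ w) (hy : ∀ i, c i = y → i = a - 2)
    (hwa : A w (c a)) (hay : A (c (a - 3)) y) : A w y ∨ A y w := by
  have hzero : ((m + 3 : ℕ) : ZMod (m + 3)) = 0 := ZMod.natCast_self _
  push_cast at hzero
  have h2 : a - 2 = a + ((m + 1 : ℕ) : ZMod (m + 3)) := by push_cast; linear_combination -hzero
  have h3 : a - 3 = a + (m : ZMod (m + 3)) := by linear_combination -hzero
  rw [h2] at hy
  rw [h3] at hay
  let G : ℕ → V := fun t => if t = 0 then w else if t = m + 2 then y else c (a + (t - 1 : ℕ))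
  have hwalk : IsWalk A G (m + 2) := by
    rintro (_ | t) ht
    · simpa [G] using hwa
    · rcases Nat.lt_succ_iff_lt_or_eq.mp (Nat.succ_lt_succ_iff.mp ht) with ht | rfl
      · simpa [G, show t ≠ m + 1 by omega, show t ≠ m by omega, add_assoc]
          using hc.2 (a + t)
      · simpa [G] using hay
  have hmid (s t : ℕ) (hs : s ≤ m) (ht : t ≤ m) (h : c (a + s) = c (a + t)) : s = t :=
    ZMod.natCast_injOn_Iio _ (Set.mem_Iio.mpr (by omega)) (Set.mem_Iio.mpr (by omega))
      (add_left_cancel (hc.1 h))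
  have hmidy (s : ℕ) (hs : s ≤ m) : c (a + s) ≠ y := fun h => by
    have := ZMod.natCast_injOn_Iio _ (Set.mem_Iio.mpr (by omega)) (Set.mem_Iio.mpr (by omega))
      (add_left_cancel (hy _ h))
    omega
  have hinj : Set.InjOn G (Set.Iic (m + 2)) := by
    intro s hs t ht h
    rw [Set.mem_Iic] at hs ht
    simp only [G] at h
    split_ifs at h
    all_goals first
      | omega
      | exact absurd h (hw _) | exact absurd h.symm (hw _)
      | exact absurd h hyw | exact absurd h.symm hyw
      | exact absurd h (hmidy _ (by omega)) | exact absurd h.symm (hmidy _ (by omega))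
      | have := hmid _ _ (by omega) (by omega) h; omega
  simpa [G] using hqt _ _ (hasPathN_of_isWalk hwalk hinj)

theorem KQuasiTrans.arc_sub_two_of_isDirectedCycle {m : ℕ} (hqt : KQuasiTrans A (m + 2))
    {c : ZMod (m + 3) → V} (hc : IsDirectedCycle A c) {w : V} (hw : ∀ i, c i ≠ w)
    (hin : ∀ i, ¬ A (c i) w) {a : ZMod (m + 3)} (h : A w (c a)) : A w (c (a - 2)) :=
  (hqt.arc_or_arc_of_isDirectedCycle hc hw (hw _) (fun _ hi => hc.1 hi) h
    (by simpa [sub_add_cancel, show (a - 3 + 1 : ZMod (m + 3)) = a - 2 by ring]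
      using hc.2 (a - 3))).resolve_right (hin _)

theorem KQuasiTrans.forall_arc_of_isDirectedCycle {m : ℕ} (hm : Even m)
    (hqt : KQuasiTrans A (m + 2)) {c : ZMod (m + 3) → V} (hc : IsDirectedCycle A c) {w : V}
    (hw : ∀ i, c i ≠ w) (hin : ∀ i, ¬ A (c i) w) {a : ZMod (m + 3)} (h : A w (c a))
    (i : ZMod (m + 3)) : A w (c i) := by
  have hiter (t : ℕ) : A w (c (a - 2 * t)) := by
    induction t with
    | zero => simpa using h
    | succ t ih =>
      simpa [mul_add, sub_add_eq_sub_sub] using hqt.arc_sub_two_of_isDirectedCycle hc hw hin ih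
  let two := ZMod.unitOfCoprime 2 (Nat.coprime_two_left.mpr (hm.add_odd (by decide)) :
    Nat.Coprime 2 (m + 3))
  have htwo : (2 : ZMod (m + 3)) * ↑two⁻¹ = 1 := by
    have := two.mul_inv
    rwa [ZMod.coe_unitOfCoprime, Nat.cast_ofNat] at this
  convert hiter ((a - i) * ↑two⁻¹ : ZMod (m + 3)).val
  rw [ZMod.natCast_zmod_val]
  linear_combination (a - i) * htwo

end Cycles

section Geodesics

variable {A : V → V → Prop}

def IsGeodesic (A : V → V → Prop) (F : ℕ → V) (n : ℕ) : Prop :=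
  IsWalk A F n ∧ ∀ j ≤ n, ∀ L, HasWalk A (F 0) (F j) L → j ≤ L

theorem exists_isGeodesic_of_not_ddist_le {u v : V} {n : ℕ} (h : Reaches A v u)
    (hd : ¬ ddist A v u ≤ n) : ∃ F, F 0 = v ∧ IsGeodesic A F (n + 1) := by
  classical
  have hex := reaches_iff_exists_hasWalk.mp h
  obtain ⟨N, hN, hmin⟩ : ∃ N, HasWalk A v u N ∧ ∀ L < N, ¬ HasWalk A v u L :=
    ⟨Nat.find hex, Nat.find_spec hex, fun L => Nat.find_min hex⟩
  have hnN : n + 1 ≤ N :=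
    not_lt.mp fun hN' =>
      hd ((ddist_le_of_hasWalk hN).trans (by exact_mod_cast Nat.lt_succ_iff.mp hN'))
  obtain ⟨F, hF, rfl, rfl⟩ := hN
  refine ⟨F, rfl, fun i hi => hF i (by omega), fun j hj L hL => ?_⟩
  by_contra hLj
  exact hmin _ (by omega) (hL.trans (hF.hasWalk (by omega) le_rfl))

namespace IsGeodesic

variable {F : ℕ → V} {n : ℕ}

theorem injOn (hF : IsGeodesic A F n) : Set.InjOn F (Set.Iic n) := by
  intro i hi j hj h
  by_contra hne
  wlog hlt : i < j generalizing i j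
  · exact this hj hi h.symm (Ne.symm hne) (by omega)
  have := hF.2 j hj i (by simpa [h] using hF.1.hasWalk (Nat.zero_le i) hi)
  omega

theorem le_add_one_of_arc (hF : IsGeodesic A F n) {a b : ℕ} (ha : a ≤ n) (hb : b ≤ n)
    (h : A (F a) (F b)) : b ≤ a + 1 :=
  hF.2 b hb _ (by simpa using (hF.1.hasWalk (Nat.zero_le a) ha).trans (.of_arc h))

theorem eq_one_of_arc_zero (hloop : ∀ v : V, ¬ A v v) (hF : IsGeodesic A F n) {j : ℕ}
    (hj : j ≤ n) (h : A (F 0) (F j)) : j = 1 := by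
  have := hF.le_add_one_of_arc (Nat.zero_le n) hj h
  obtain rfl | hj0 := Nat.eq_zero_or_pos j
  · exact absurd h (hloop _)
  · omega

theorem arc_back {k : ℕ} (hF : IsGeodesic A F n) (hqt : KQuasiTrans A k) (hk : 2 ≤ k) {a : ℕ}
    (h : a + k ≤ n) : A (F (a + k)) (F a) := by
  have hpath : HasPathN A (F a) (F (a + k)) k :=
    hasPathN_of_isWalk (F := fun t => F (a + t)) (fun t ht => hF.1 _ (by omega))
      fun s hs t ht hst => by
        rw [Set.mem_Iic] at hs ht
        have := hF.injOn (Set.mem_Iic.mpr (by omega)) (Set.mem_Iic.mpr (by omega)) hst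
        omega
  refine (hqt _ _ hpath).resolve_left fun h' => ?_
  have := hF.le_add_one_of_arc (by omega) h h'
  omega

theorem arc_last {m : ℕ} (hloop : ∀ v : V, ¬ A v v) (hm : Even m) (hqt : KQuasiTrans A (m + 2))
    (hF : IsGeodesic A F (m + 4)) :
    (∀ j ≤ m + 2, A (F (m + 4)) (F j)) ∧ ∀ x, A (F 0) x → A (F (m + 4)) x := by
  set c : ZMod (m + 3) → V := fun i => F i.val
  have hcF (j : ℕ) (hj : j ≤ m + 2) : c j = F j := by
    simp only [c, ZMod.val_cast_of_lt (Nat.lt_succ_of_le hj)]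
  have hc : IsDirectedCycle A c :=
    isDirectedCycle_of_isWalk hF.1 hF.injOn (by omega)
      (by simpa using hF.arc_back hqt (by omega) (a := 0) (by omega))
  have hw (i : ZMod (m + 3)) : c i ≠ F (m + 4) := fun h => by
    have := hF.injOn (Set.mem_Iic.mpr (by have := i.val_lt; omega)) (Set.mem_Iic.mpr le_rfl) h
    have := i.val_lt
    omega
  have hin (i : ZMod (m + 3)) : ¬ A (c i) (F (m + 4)) := fun h => by
    have := hF.le_add_one_of_arc (by have := i.val_lt; omega) le_rfl h
    have := i.val_lt
    omega
  have hdom := hqt.forall_arc_of_isDirectedCycle hm hc hw hin (a := 2)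
    (by simpa [← hcF 2 (by omega), show 2 + (m + 2) = m + 4 by omega]
      using hF.arc_back hqt (by omega) (a := 2) (by omega))
  refine ⟨fun j hj => hcF j hj ▸ hdom j, fun x hx => ?_⟩
  have hxw : x ≠ F (m + 4) := by
    rintro rfl
    have := hF.le_add_one_of_arc (Nat.zero_le _) le_rfl hx
    omega
  have hxc (i : ZMod (m + 3)) (hi : c i = x) : i = 3 - 2 := by
    subst hi
    rw [← ZMod.natCast_zmod_val i, hF.eq_one_of_arc_zero hloop (by have := i.val_lt; omega) hx]
    norm_num
  -- the `k`-path `w, x₃, …, x_k, x₀, x`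
  refine (hqt.arc_or_arc_of_isDirectedCycle hc hw hxw hxc (hdom 3)
    (by simpa [c] using hx)).resolve_right fun h => ?_
  have := hF.2 (m + 4) le_rfl 2 ((HasWalk.of_arc hx).trans (.of_arc h))
  omega

end IsGeodesic

end Geodesics

section Degrees

variable [Finite V] {A : V → V → Prop} {C : Set V}

theorem outDegIn_le_maxOutDegIn {z : V} (hz : z ∈ C) : outDegIn A C z ≤ maxOutDegIn A C :=
  le_csSup ((Set.toFinite C).image _).bddAbove ⟨z, hz, rfl⟩

theorem outDegIn_add_ncard_le {S : Set V} {v w : V} (hSC : S ⊆ C) (hS : ∀ x ∈ S, A w x)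
    (hvw : ∀ x, A v x → A w x) (hSv : (S ∩ {x | A v x}).Subsingleton) :
    outDegIn A C v + S.ncard ≤ outDegIn A C w + 1 := by
  have hunion : {x ∈ C | A v x} ∪ S ⊆ {x ∈ C | A w x} := by
    rintro x (⟨hxC, hx⟩ | hx)
    · exact ⟨hxC, hvw x hx⟩
    · exact ⟨hSC hx, hS x hx⟩
  have hinter : ({x ∈ C | A v x} ∩ S).ncard ≤ 1 :=
    (Set.ncard_le_ncard (t := S ∩ {x | A v x}) fun x hx => ⟨hx.2, hx.1.2⟩).trans
      (Set.ncard_le_one_iff_subsingleton.mpr hSv)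
  have := Set.ncard_union_add_ncard_inter {x ∈ C | A v x} S
  have := Set.ncard_le_ncard hunion
  unfold outDegIn
  omega

end Degrees

theorem kqt_even_degree_king_general
    [Fintype V] (A : V → V → Prop) (hloop : ∀ v : V, ¬ A v v)
    (k : ℕ) (hk : 2 ≤ k) (hke : Even k) (hqt : KQuasiTrans A k)
    (C : Set V) (hC : IsInitialStrongComponent A C)
    (huniq : ∀ S : Set V, IsInitialStrongComponent A S → S = C)
    (v : V) (hv : v ∈ C)
    (hlb : (maxOutDegIn A C : ℤ) - (k : ℤ) < (outDegIn A C v : ℤ)) :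
    IsRKing A (k + 1) v := by
  intro u
  by_contra hu
  obtain ⟨m, rfl⟩ : ∃ m, k = m + 2 := ⟨k - 2, by omega⟩
  obtain ⟨F, rfl, hF⟩ := exists_isGeodesic_of_not_ddist_le
    (reaches_of_forall_isInitialStrongComponent_eq huniq hv u) hu
  obtain ⟨hdom, hnbr⟩ := hF.arc_last hloop (by simpa [Nat.even_add] using hke) hqt
  have hmem (j : ℕ) (hj : j ≤ m + 4) : F j ∈ C :=
    hC.1.mem_of_reaches hv (hF.1.reaches (Nat.zero_le j) hj)
      ((hF.1.reaches hj le_rfl).trans (.of_arc (hdom 0 (by omega))))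
  have hcount := outDegIn_add_ncard_le (S := F '' Set.Iic (m + 2))
    (by rintro _ ⟨j, hj, rfl⟩; exact hmem j (by have := Set.mem_Iic.mp hj; omega))
    (by rintro _ ⟨j, hj, rfl⟩; exact hdom j hj) hnbr
    (by
      rintro _ ⟨⟨i, hi, rfl⟩, hvi⟩ _ ⟨⟨j, hj, rfl⟩, hvj⟩
      simp only [Set.mem_Iic, Set.mem_ofPred_eq] at hi hj hvi hvj
      rw [hF.eq_one_of_arc_zero hloop (by omega) hvi, hF.eq_one_of_arc_zero hloop (by omega) hvj])
  rw [(hF.injOn.mono (Set.Iic_subset_Iic.mpr (by omega))).ncard_image, Set.ncard_Iic_nat]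
    at hcount
  have := outDegIn_le_maxOutDegIn (A := A) (hmem (m + 4) le_rfl)
  omega

/-- even `k ≥ 2`, unique initial strong component `C`; any vertex of `C`
whose out-degree in `C` exceeds `Δ⁺_C − k` is a `(k+1)`-king of `D`. -/
theorem kqt_even_degree_king
    [Fintype V] (A : V → V → Prop) (hloop : ∀ v : V, ¬ A v v)
    (k : ℕ) (hk : 2 ≤ k) (hke : Even k) (hqt : KQuasiTrans A k)
    (C : Set V) (hC : IsInitialStrongComponent A C)
    (huniq : ∀ S : Set V, IsInitialStrongComponent A S → S = C)
    (v : V) (hv : v ∈ C)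
    (hub : outDegIn A C v ≤ maxOutDegIn A C)
    (hlb : (maxOutDegIn A C : ℤ) - (k : ℤ) < (outDegIn A C v : ℤ)) :
    IsRKing A (k + 1) v :=
  kqt_even_degree_king_general A hloop k hk hke hqt C hC huniq v hv hlb
end

section
/- Let k ≥ 4 be an even integer and let D be a k-quasi-transitive digraph. If v is a (k+2)-king of D but not a (k+1)-king, then there exists a vertex u with d(v,u) = k+2 which is a 2-king of D. Moreover, the set S = { w ∈ V(D) : d(v,w) = k+2 } induces a semicomplete subdigraph of D. -/
/-!
Let `w` be at distance `k + 2` from `v` and `v = F 0, …, F (k + 2) = w` a shortest path. Walks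
assembled from pieces of shortest paths from `v` are paths as soon as their vertices lie at
distinct distances from `v`, so `k`-quasi-transitivity applies to them. A chord `F i → F j` with
`j ≥ i + 2` would shorten `F`, which gives the back arcs `F (a + k) → F a`; and an arc into `w`
from a vertex at distance at most `k` would bring `w` within distance `k + 1`, so a path of
length `k` from `w` to such a vertex `y` forces `w → y`.

The paths `w, F j, …, F k, F 0, …, F (j - 2)` turn `w → F j` into `w → F (j - 2)`. From the back
arc `w → F 2` this gives `w → v`, then `w → F (k - 1)` through `w, F 0, …, F (k - 1)` and all odd
`j`, then `w → F k` through `w, F 1, …, F k` and, as `k` is even, all even `j`. The same paths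
with a shortest path to any `z` in place of the tail show that `w` dominates every vertex at
distance less than `k` from `v` and reaches those at distance `k` or `k + 1` in two steps.

Two vertices `x ≠ y` at distance `k + 2` are joined by the path `x, G 3, …, G (k + 2) = y` along
a shortest path `G` to `y`, so they are adjacent; in this semicomplete digraph a vertex of
maximum out-degree is a `2`-king.
-/

variable {V : Type*}

section

variable {A : V → V → Prop} {u x y z : V} {n : ℕ}

lemma ddist_le_of_hasPathN (h : HasPathN A u z n) : ddist A u z ≤ n :=
  sInf_le ⟨n, rfl, h⟩

lemma hasPathN_of_ddist_eq (h : ddist A u z = n) : HasPathN A u z n := by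
  have hne : {d : ℕ∞ | ∃ m : ℕ, d = m ∧ HasPathN A u z m}.Nonempty := by
    by_contra hemp
    rw [Set.not_nonempty_iff_eq_empty] at hemp
    simp [ddist, hemp] at h
  obtain ⟨m, hm, hp⟩ := csInf_mem hne
  rwa [← Nat.cast_inj.mp (hm.symm.trans h)]

lemma hasPathN_zero (u : V) : HasPathN A u u 0 :=
  ⟨fun _ => u, fun i j _ => Fin.ext (by omega), rfl, rfl, fun i => i.elim0⟩

lemma eq_of_hasPathN_zero (h : HasPathN A u z 0) : u = z := by
  obtain ⟨f, -, rfl, rfl, -⟩ := h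
  rfl

lemma hasPathN_prefix {f : Fin (n + 1) → V} (hf : Function.Injective f)
    (hc : ∀ i : Fin n, A (f i.castSucc) (f i.succ)) (j : Fin (n + 1)) :
    HasPathN A (f 0) (f j) j := by
  have hj : (j : ℕ) + 1 ≤ n + 1 := j.2
  refine ⟨f ∘ Fin.castLE hj, hf.comp (Fin.castLE_injective hj), rfl, rfl, fun i => ?_⟩
  exact hc (i.castLE (by omega))

lemma ddist_le_add_one_of_adj (hxy : A x y) : ddist A u y ≤ ddist A u x + 1 := by
  induction h : ddist A u x using ENat.recTopCoe with
  | top => simp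
  | coe n =>
    obtain ⟨f, hf, rfl, rfl, hc⟩ := hasPathN_of_ddist_eq h
    by_cases hy : y ∈ Set.range f
    · obtain ⟨j, rfl⟩ := hy
      calc ddist A (f 0) (f j) ≤ (j : ℕ) := ddist_le_of_hasPathN (hasPathN_prefix hf hc j)
        _ ≤ n + 1 := by exact_mod_cast (by omega : (j : ℕ) ≤ n + 1)
    · refine ddist_le_of_hasPathN ⟨Fin.snoc f y, Fin.snoc_injective_iff.mpr ⟨hf, hy⟩,
        by simp, by simp, fun i => ?_⟩
      induction i using Fin.lastCases with
      | last => simpa using hxy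
      | cast i => rw [Fin.succ_castSucc, Fin.snoc_castSucc, Fin.snoc_castSucc]; exact hc i

lemma ddist_self (u : V) : ddist A u u = 0 := by
  simpa using ddist_le_of_hasPathN (hasPathN_zero (A := A) u)

lemma ddist_le_one_of_adj (h : A x y) : ddist A x y ≤ 1 := by
  simpa [ddist_self] using ddist_le_add_one_of_adj (u := x) h

lemma ddist_le_two_of_adj_of_adj (hxy : A x y) (hyz : A y z) : ddist A x z ≤ 2 :=
  calc ddist A x z ≤ ddist A x y + 1 := ddist_le_add_one_of_adj hyz
    _ ≤ 1 + 1 := by gcongr; exact ddist_le_one_of_adj hxy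
    _ = 2 := one_add_one_eq_two

lemma hasPathN_of_isChain {l : List V} (hc : l.IsChain A) (hnd : l.Nodup)
    (hu : l.head? = some u) (hz : l.getLast? = some z) : HasPathN A u z (l.length - 1) := by
  obtain _ | ⟨a, t⟩ := l
  · cases hu
  cases hu
  refine ⟨(u :: t).get, List.nodup_iff_injective_get.mp hnd, rfl, ?_,
    fun i => hc.getElem i (by simp)⟩
  rw [List.getLast?_eq_getElem?] at hz
  simpa using hz

lemma ddist_le_ddist_add_of_chain {G : ℕ → V} {i : ℕ}
    (hG : ∀ j < n, A (G (i + j)) (G (i + j + 1))) :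
    ddist A u (G (i + n)) ≤ ddist A u (G i) + n := by
  induction n with
  | zero => simp
  | succ n ih =>
    calc ddist A u (G (i + (n + 1))) ≤ ddist A u (G (i + n)) + 1 :=
          ddist_le_add_one_of_adj (hG n (by omega))
      _ ≤ ddist A u (G i) + n + 1 := by gcongr; exact ih fun j hj => hG j (by omega)
      _ = ddist A u (G i) + (n + 1 : ℕ) := by push_cast; ring

structure IsGeodesic_s7 (A : V → V → Prop) (v : V) (G : ℕ → V) (m : ℕ) : Prop where
  adj : ∀ i < m, A (G i) (G (i + 1))
  ddist_eq : ∀ i ≤ m, ddist A v (G i) = i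

lemma exists_isGeodesic {v : V} {m : ℕ} (h : ddist A v z = m) :
    ∃ G, IsGeodesic_s7 A v G m ∧ G m = z := by
  obtain ⟨f, hf, rfl, rfl, hc⟩ := hasPathN_of_ddist_eq h
  let G : ℕ → V := fun i => f ⟨min i m, by omega⟩
  have hG : ∀ i (hi : i ≤ m), G i = f ⟨i, by omega⟩ := fun i hi => by simp [G, min_eq_left hi]
  have hadj : ∀ i < m, A (G i) (G (i + 1)) := fun i hi => by
    rw [hG i hi.le, hG (i + 1) hi]; exact hc ⟨i, hi⟩
  refine ⟨G, ⟨hadj, fun i hi => ?_⟩, hG m le_rfl⟩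
  have hle : ddist A (f 0) (G i) ≤ i := by
    rw [hG i hi]; exact ddist_le_of_hasPathN (hasPathN_prefix hf hc ⟨i, by omega⟩)
  obtain ⟨c, hc', hci⟩ := ENat.le_natCast_iff.mp hle
  have hGm : G m = f (Fin.last m) := hG m le_rfl
  have hm := ddist_le_ddist_add_of_chain (u := f 0) (i := i) (n := m - i)
    fun j hj => hadj (i + j) (by omega)
  rw [show i + (m - i) = m by omega, hGm, h, hc'] at hm
  have : m ≤ c + (m - i) := by exact_mod_cast hm
  rw [hc']
  exact_mod_cast (by omega : c = i)

namespace IsGeodesic_s7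

variable {v w : V} {F G : ℕ → V} {m a b : ℕ}

lemma apply_zero (hG : IsGeodesic_s7 A v G m) : G 0 = v :=
  (eq_of_hasPathN_zero (hasPathN_of_ddist_eq (hG.ddist_eq 0 m.zero_le))).symm

lemma mono (hG : IsGeodesic_s7 A v G n) (h : m ≤ n) : IsGeodesic_s7 A v G m :=
  ⟨fun i hi => hG.adj i (by omega), fun i hi => hG.ddist_eq i (by omega)⟩

lemma apply_ne (hG : IsGeodesic_s7 A v G m) {i : ℕ} (hi : i ≤ m) (hw : ddist A v w ≠ i) :
    G i ≠ w :=
  fun h => hw (h ▸ hG.ddist_eq i hi)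

lemma not_adj (hG : IsGeodesic_s7 A v G m) (hab : a + 2 ≤ b) (hb : b ≤ m) : ¬ A (G a) (G b) := by
  intro h
  have := ddist_le_add_one_of_adj (u := v) h
  rw [hG.ddist_eq b hb, hG.ddist_eq a (by omega)] at this
  have : b ≤ a + 1 := by exact_mod_cast this
  omega

lemma isChain_map_range' (hG : IsGeodesic_s7 A v G m) (h : a + n ≤ m + 1) :
    ((List.range' a n).map G).IsChain A := by
  rw [List.isChain_map, List.isChain_iff_getElem]
  intro i hi
  simp only [List.length_range'] at hi
  simpa [List.getElem_range', Nat.add_assoc] using hG.adj (a + i) (by omega)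

lemma nodup_map_range' (hG : IsGeodesic_s7 A v G m) (h : a + n ≤ m + 1) :
    ((List.range' a n).map G).Nodup := by
  refine List.Nodup.map_on (fun i hi j hj hij => ?_) List.nodup_range'
  simp only [List.mem_range'_1] at hi hj
  have := (hG.ddist_eq i (by omega)).symm.trans (hij ▸ hG.ddist_eq j (by omega))
  exact_mod_cast this

lemma hasPathN (hG : IsGeodesic_s7 A v G m) (hab : a ≤ b) (hb : b ≤ m) :
    HasPathN A (G a) (G b) (b - a) := by
  have := hasPathN_of_isChain (u := G a) (z := G b)
    (hG.isChain_map_range' (a := a) (n := b - a + 1) (by omega)) (hG.nodup_map_range' (by omega))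
    (by simp [List.head?_range'])
    (by simp [List.getLast?_range', show a + (b - a + 1) - 1 = b by omega])
  simpa using this

lemma hasPathN_cons (hG : IsGeodesic_s7 A v G m) (hw : A w (G a))
    (hwG : ∀ i, a ≤ i → i ≤ b → G i ≠ w) (hab : a ≤ b) (hb : b ≤ m) :
    HasPathN A w (G b) (b - a + 1) := by
  have := hasPathN_of_isChain (u := w) (z := G b)
    (l := w :: (List.range' a (b - a + 1)).map G)
    (List.isChain_cons.mpr ⟨by simpa [List.head?_range'] using hw,
      hG.isChain_map_range' (by omega)⟩)
    (List.nodup_cons.mpr ⟨by simpa using fun i hi hi' => hwG i hi (by omega),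
      hG.nodup_map_range' (by omega)⟩)
    rfl
    (by simp [List.getLast?_cons, List.getLast?_range', show a + (b - a + 1) - 1 = b by omega])
  simpa using this

-- The path `w, F a, …, F b, G 0, …, G m`.
lemma hasPathN_detour (hF : IsGeodesic_s7 A v F n) (hG : IsGeodesic_s7 A v G m) (hw : A w (F a))
    (hFG : A (F b) (G 0)) (hab : a ≤ b) (hb : b ≤ n) (hma : m < a)
    (hwb : (b : ℕ∞) < ddist A v w) : HasPathN A w (G m) (b - a + m + 2) := by
  have hwd : ∀ i ≤ b, ddist A v w ≠ i := fun i hi =>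
    (lt_of_le_of_lt (by exact_mod_cast hi) hwb).ne'
  have := hasPathN_of_isChain (u := w) (z := G m)
    (l := w :: ((List.range' a (b - a + 1)).map F ++ (List.range' 0 (m + 1)).map G))
    (List.isChain_cons.mpr ⟨by simpa [List.head?_range'] using hw,
      (hF.isChain_map_range' (by omega)).append (hG.isChain_map_range' (by omega))
        (by simpa [List.getLast?_range', List.head?_range', show a + (b - a + 1) - 1 = b by omega]
          using hFG)⟩)
    (List.nodup_cons.mpr ⟨?_, (hF.nodup_map_range' (by omega)).append
      (hG.nodup_map_range' (by omega)) ?_⟩)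
    rfl (by simp [List.getLast?_cons, List.getLast?_range'])
  · simpa [show b - a + 1 + (m + 1) = b - a + m + 2 by omega] using this
  · simp only [List.mem_append, List.mem_map, List.mem_range'_1, not_or, not_exists, not_and]
    exact ⟨fun i _ hi => hF.apply_ne (by omega) (hwd i (by omega)) hi,
      fun i _ hi => hG.apply_ne (by omega) (hwd i (by omega)) hi⟩
  · simp only [List.disjoint_iff_ne, List.mem_map, List.mem_range'_1]
    rintro _ ⟨i, hi, rfl⟩ _ ⟨j, hj, rfl⟩ h
    have := (hF.ddist_eq i (by omega)).symm.trans (h ▸ hG.ddist_eq j (by omega))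
    norm_cast at this; omega

end IsGeodesic_s7

namespace KQuasiTrans

variable {k m a j : ℕ} {v w : V} {F G : ℕ → V}

lemma adj_of_hasPathN (hqt : KQuasiTrans A k) (hw : ddist A v w = (k + 2 : ℕ))
    (hp : HasPathN A w y k) (hy : ddist A v y ≤ k) : A w y := by
  refine (hqt w y hp).resolve_right fun hyw => ?_
  have : ddist A v w ≤ k + 1 := (ddist_le_add_one_of_adj hyw).trans (by gcongr)
  rw [hw] at this
  norm_cast at this
  omega

lemma adj_back (hqt : KQuasiTrans A k) (hk : 2 ≤ k) (hF : IsGeodesic_s7 A v F m) (ha : a + k ≤ m) :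
    A (F (a + k)) (F a) :=
  (hqt _ _ (by simpa using hF.hasPathN (a := a) (b := a + k) (by omega) ha)).resolve_left
    (hF.not_adj (by omega) ha)

lemma adj_of_adj_detour (hqt : KQuasiTrans A k) (hk : 2 ≤ k) (hF : IsGeodesic_s7 A v F (k + 2))
    (hG : IsGeodesic_s7 A v G m) (hm : m + 2 ≤ k) (h : A (F (k + 2)) (F (m + 2))) :
    A (F (k + 2)) (G m) := by
  have hback : A (F k) (G 0) := by
    simpa [hF.apply_zero, hG.apply_zero] using hqt.adj_back hk hF (a := 0) (by omega)
  have hp := hF.hasPathN_detour hG h hback (by omega) (by omega) (by omega)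
    (by rw [hF.ddist_eq _ le_rfl]; norm_cast; omega)
  rw [show k - (m + 2) + m + 2 = k by omega] at hp
  exact hqt.adj_of_hasPathN (hF.ddist_eq _ le_rfl) hp
    (by rw [hG.ddist_eq m le_rfl]; norm_cast; omega)

lemma adj_of_adj_cons (hqt : KQuasiTrans A k) (hk : 1 ≤ k) (hw : ddist A v w = (k + 2 : ℕ))
    (hG : IsGeodesic_s7 A v G m) (ha : a ≤ 1) (hm : a + k - 1 ≤ m) (h : A w (G a)) :
    A w (G (a + k - 1)) := by
  have hp := hG.hasPathN_cons h (b := a + k - 1)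
    (fun i _ hi => hG.apply_ne (by omega) (by rw [hw]; norm_cast; omega)) (by omega) hm
  rw [show a + k - 1 - a + 1 = k by omega] at hp
  exact hqt.adj_of_hasPathN hw hp (by rw [hG.ddist_eq _ hm]; norm_cast; omega)

lemma adj_geodesic (hqt : KQuasiTrans A k) (hk : 2 ≤ k) (hke : Even k)
    (hF : IsGeodesic_s7 A v F (k + 2)) (hj : j ≤ k) : A (F (k + 2)) (F j) := by
  have hv : A (F (k + 2)) (F 0) :=
    hqt.adj_of_adj_detour hk hF (hF.mono (m := 0) (by omega)) (by omega)
      (by simpa [add_comm] using hqt.adj_back hk hF (a := 2) (by omega))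
  have hdown : ∀ i t, i ≤ k → A (F (k + 2)) (F i) → 2 * t ≤ i →
      A (F (k + 2)) (F (i - 2 * t)) := by
    intro i t hi h
    induction t with
    | zero => simpa using h
    | succ t ih =>
      intro ht
      refine hqt.adj_of_adj_detour hk hF (hF.mono (by omega)) (by omega) ?_
      rw [show i - 2 * (t + 1) + 2 = i - 2 * t by omega]
      exact ih (by omega)
  have hodd : A (F (k + 2)) (F (k - 1)) := by
    simpa using hqt.adj_of_adj_cons (by omega) (hF.ddist_eq _ le_rfl) hF (a := 0) (by omega)
      (by omega) hv
  obtain ⟨r, hr⟩ := hke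
  have heven : A (F (k + 2)) (F k) := by
    have h1 := hdown (k - 1) (r - 1) (by omega) hodd (by omega)
    rw [show k - 1 - 2 * (r - 1) = 1 by omega] at h1
    simpa [show 1 + k - 1 = k by omega] using
      hqt.adj_of_adj_cons (by omega) (hF.ddist_eq _ le_rfl) hF (a := 1) le_rfl (by omega) h1
  rcases Nat.even_or_odd j with ⟨s, hs⟩ | ⟨s, hs⟩
  · simpa [show k - 2 * (r - s) = j by omega] using hdown k (r - s) le_rfl heven (by omega)
  · simpa [show k - 1 - 2 * (r - 1 - s) = j by omega] using
      hdown (k - 1) (r - 1 - s) (by omega) hodd (by omega)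

lemma adj_of_ddist_eq (hqt : KQuasiTrans A k) (hk : 2 ≤ k) (hke : Even k)
    (hw : ddist A v w = (k + 2 : ℕ)) (hz : ddist A v z = m) (hm : m + 1 ≤ k) : A w z := by
  obtain ⟨F, hF, rfl⟩ := exists_isGeodesic hw
  obtain ⟨G, hG, rfl⟩ := exists_isGeodesic hz
  rcases (by omega : m + 2 ≤ k ∨ m = k - 1) with hm | rfl
  · exact hqt.adj_of_adj_detour hk hF hG hm (hqt.adj_geodesic hk hke hF (by omega))
  · have hv : A (F (k + 2)) (G 0) := by
      simpa [hF.apply_zero, hG.apply_zero] using hqt.adj_geodesic hk hke hF (j := 0) (by omega)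
    simpa using hqt.adj_of_adj_cons (by omega) hw hG (a := 0) (by omega) (by omega) hv

lemma ddist_le_two (hqt : KQuasiTrans A k) (hk : 2 ≤ k) (hke : Even k)
    (hw : ddist A v w = (k + 2 : ℕ)) (hz : ddist A v z ≤ (k + 1 : ℕ)) : ddist A w z ≤ 2 := by
  obtain ⟨m, hzm, hm⟩ := ENat.le_natCast_iff.mp hz
  obtain ⟨G, hG, rfl⟩ := exists_isGeodesic hzm
  rcases (by omega : m + 1 ≤ k ∨ m = k ∨ m = k + 1) with hm | rfl | rfl
  · exact (ddist_le_one_of_adj (hqt.adj_of_ddist_eq hk hke hw hzm hm)).trans one_le_two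
  · have h := hqt.adj_of_ddist_eq hk hke hw (hG.ddist_eq (m - 1) (by omega)) (by omega)
    refine ddist_le_two_of_adj_of_adj h ?_
    simpa [show m - 1 + 1 = m by omega] using hG.adj (m - 1) (by omega)
  · have h1 := hqt.adj_of_ddist_eq hk hke hw (hG.ddist_eq 1 (by omega)) (by omega)
    have hk' := hqt.adj_of_adj_cons (by omega) hw hG (a := 1) le_rfl (by omega) h1
    rw [show 1 + k - 1 = k by omega] at hk'
    exact ddist_le_two_of_adj_of_adj hk' (hG.adj k (by omega))

lemma adj_or_adj (hqt : KQuasiTrans A k) (hk : 4 ≤ k) (hke : Even k)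
    (hx : ddist A v x = (k + 2 : ℕ)) (hy : ddist A v y = (k + 2 : ℕ)) (hxy : x ≠ y) :
    A x y ∨ A y x := by
  obtain ⟨G, hG, rfl⟩ := exists_isGeodesic hy
  have h3 : A x (G 3) :=
    hqt.adj_of_ddist_eq (by omega) hke hx (hG.ddist_eq 3 (by omega)) (by omega)
  have hp := hG.hasPathN_cons h3 (b := k + 2) (fun i _ hi => by
    rcases (by omega : i = k + 2 ∨ i < k + 2) with rfl | hi
    · exact hxy.symm
    · exact hG.apply_ne (by omega) (by rw [hx]; norm_cast; omega)) (by omega) le_rfl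
  rw [show k + 2 - 3 + 1 = k by omega] at hp
  exact hqt x _ hp

end KQuasiTrans

lemma IsRKing.ddist_le_of_ne {r : ℕ} {v : V} (hv : IsRKing A (r + 1) v)
    (hz : ddist A v z ≠ (r + 1 : ℕ)) : ddist A v z ≤ r := by
  obtain ⟨m, hzm, hm⟩ := ENat.le_natCast_iff.mp (hv z)
  rw [hzm] at hz ⊢
  norm_cast at hz ⊢
  omega

lemma IsRKing.exists_ddist_eq {r : ℕ} {v : V} (hv : IsRKing A (r + 1) v)
    (hnv : ¬ IsRKing A r v) : ∃ z, ddist A v z = (r + 1 : ℕ) := by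
  obtain ⟨z, hz⟩ := not_forall.mp hnv
  exact ⟨z, by_contra fun h => hz (hv.ddist_le_of_ne h)⟩

lemma exists_forall_ddist_le_two {S : Set V} (hS : S.Finite) (hne : S.Nonempty)
    (hsc : ∀ x ∈ S, ∀ y ∈ S, x ≠ y → A x y ∨ A y x) : ∃ u ∈ S, ∀ z ∈ S, ddist A u z ≤ 2 := by
  obtain ⟨u, hu, hmax⟩ :=
    Set.exists_max_image S (fun x => {y ∈ S | y ≠ x ∧ A x y}.ncard) hS hne
  refine ⟨u, hu, fun z hz => ?_⟩
  by_contra hfar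
  have hzu : z ≠ u := by rintro rfl; simp [ddist_self] at hfar
  have huz : ¬ A u z := fun h => hfar ((ddist_le_one_of_adj h).trans one_le_two)
  have hsub : insert u {y ∈ S | y ≠ u ∧ A u y} ⊆ {y ∈ S | y ≠ z ∧ A z y} := by
    rintro y (rfl | ⟨hy, -, huy⟩)
    · exact ⟨hu, hzu.symm, (hsc z hz y hu hzu).resolve_right huz⟩
    · have hyz : y ≠ z := by rintro rfl; exact huz huy
      exact ⟨hy, hyz, (hsc y hy z hz hyz).resolve_left
        fun h => hfar (ddist_le_two_of_adj_of_adj huy h)⟩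
  have hcard := Set.ncard_le_ncard hsub (hS.subset fun y hy => hy.1)
  rw [Set.ncard_insert_of_notMem (fun h => h.2.1 rfl) (hS.subset fun y hy => hy.1)] at hcard
  have hle := hmax z hz
  omega

end

theorem kqt_even_two_king_semicomplete_general
    [Fintype V] (A : V → V → Prop)
    (k : ℕ) (hk : 4 ≤ k) (hke : Even k) (hqt : KQuasiTrans A k)
    (v : V) (hv : IsRKing A (k + 2) v) (hnv : ¬ IsRKing A (k + 1) v) :
    (∃ u : V, ddist A v u = ((k : ℕ∞) + 2) ∧ IsRKing A 2 u) ∧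
      (∀ x ∈ {w : V | ddist A v w = ((k : ℕ∞) + 2)},
        ∀ y ∈ {w : V | ddist A v w = ((k : ℕ∞) + 2)},
          x ≠ y → A x y ∨ A y x) := by
  have hcast : ((k : ℕ∞) + 2) = ((k + 2 : ℕ) : ℕ∞) := by push_cast; rfl
  set S := {w : V | ddist A v w = ((k : ℕ∞) + 2)}
  have hsc : ∀ x ∈ S, ∀ y ∈ S, x ≠ y → A x y ∨ A y x := fun x hx y hy =>
    hqt.adj_or_adj hk hke (hx.trans hcast) (hy.trans hcast)
  obtain ⟨w, hw⟩ := hv.exists_ddist_eq hnv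
  obtain ⟨u, hu, huS⟩ :=
    exists_forall_ddist_le_two (Set.toFinite S) ⟨w, hw.trans hcast.symm⟩ hsc
  refine ⟨⟨u, hu, fun z => ?_⟩, hsc⟩
  by_cases hz : z ∈ S
  · exact huS z hz
  · exact hqt.ddist_le_two (by omega) hke (hu.trans hcast) (hv.ddist_le_of_ne (hcast ▸ hz))

/-- even `k ≥ 4`; if `v` is a `(k+2)`-king but not a `(k+1)`-king, then some
vertex at distance `k+2` from `v` is a `2`-king, and the set of vertices at distance `k+2`
from `v` induces a semicomplete subdigraph. -/
theorem kqt_even_two_king_semicomplete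
    [Fintype V] (A : V → V → Prop) (hloop : ∀ v : V, ¬ A v v)
    (k : ℕ) (hk : 4 ≤ k) (hke : Even k) (hqt : KQuasiTrans A k)
    (v : V) (hv : IsRKing A (k + 2) v) (hnv : ¬ IsRKing A (k + 1) v) :
    (∃ u : V, ddist A v u = ((k : ℕ∞) + 2) ∧ IsRKing A 2 u) ∧
      (∀ x ∈ {w : V | ddist A v w = ((k : ℕ∞) + 2)},
        ∀ y ∈ {w : V | ddist A v w = ((k : ℕ∞) + 2)},
          x ≠ y → A x y ∨ A y x) :=
  kqt_even_two_king_semicomplete_general A k hk hke hqt v hv hnv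
end
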